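/- Let B = C^∞(V) ⊗ Λ(ξ₁,…,ξ_n) and let a: ℝ^p → ℝ be smooth. For elements f^μ = Σ_I f^μ_I ξ^I ∈ B (μ = 1,…,p) with even total parity, write the Taylor-pullback F*(a) = Σ_γ (1/γ!)(∂^γ a)(f̃¹,…,f̃^p)·Π_μ (f^μ − f̃^μ)^{γ_μ}. Then for any multi-index K ∈ {0,1}^n with deg(K) > 0, the coefficient of ξ^K in F*(a) equals Σ_{μ=1}^p (∂_{y_μ} a)(f̃¹,…,f̃^p)·f^μ_K plus a universal polynomial expression in the partial derivatives of a up to order n (evaluated at the body) and the coefficients f^ν_I with deg(I) < deg(K). -/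

import Mathlib

noncomputable section

/-- Grassmann numbers on `n` odd generators `ξ₁,…,ξ_n`, given by their
coefficients with respect to the basis `ξ^I`, `I ⊆ {1,…,n}`. -/
abbrev Coeffs (n : ℕ) := Finset (Fin n) → ℝ

/-- Koszul sign for `ξ^I · ξ^J = gsign I J · ξ^{I ∪ J}` (for disjoint I, J):
`(−1)` to the number of pairs `i ∈ I`, `j ∈ J` with `j < i`. -/
def gsign {n : ℕ} (I J : Finset (Fin n)) : ℝ :=
  (-1) ^ (∑ i ∈ I, (J.filter (· < i)).card)

/-- The Grassmann product. -/
def gMul {n : ℕ} (c d : Coeffs n) : Coeffs n :=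
  fun K => ∑ I ∈ K.powerset, gsign I (K \ I) * c I * d (K \ I)

/-- The Grassmann unit. -/
def gOne {n : ℕ} : Coeffs n := fun K => if K = ∅ then 1 else 0

/-- Grassmann powers. -/
def gPow {n : ℕ} (c : Coeffs n) : ℕ → Coeffs n
  | 0 => gOne
  | k + 1 => gMul c (gPow c k)

/-- Grassmann product of a list. -/
def gProd {n : ℕ} (l : List (Coeffs n)) : Coeffs n := l.foldr gMul gOne

/-- Partial derivative `∂_μ` on functions `ℝ^p → ℝ`. -/
def pd {p : ℕ} (μ : Fin p) (a : (Fin p → ℝ) → ℝ) : (Fin p → ℝ) → ℝ :=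
  fun x => fderiv ℝ a x (Pi.single μ 1)

/-- Iterated partial derivative `∂^γ`. -/
def mpd {p : ℕ} (γ : Fin p → ℕ) (a : (Fin p → ℝ) → ℝ) : (Fin p → ℝ) → ℝ :=
  ((List.finRange p).map (fun μ => (pd μ)^[γ μ])).foldr (· ∘ ·) id a

/-- The nilpotent part of a Grassmann number: the `ξ^∅`-coefficient is removed. -/
def nilpart {n : ℕ} (c : Coeffs n) : Coeffs n :=
  fun I => if I = ∅ then 0 else c I

/-- The Taylor pullback
`F*(a) = Σ_γ (1/γ!)(∂^γ a)(f̃¹,…,f̃^p) · Π_μ (f^μ − f̃^μ)^{γ_μ}`,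
for `a : ℝ^p → ℝ` smooth and `f¹,…,f^p` Grassmann numbers with bodies
`f̃^μ = f^μ_∅`; the sum is over multi-indices `γ` with `|γ| ≤ n`. -/
def Fstar {p n : ℕ} (a : (Fin p → ℝ) → ℝ) (f : Fin p → Coeffs n) : Coeffs n :=
  ∑ γ ∈ Finset.univ.filter (fun γ : Fin p → Fin (n + 1) => ∑ μ, (γ μ : ℕ) ≤ n),
    ((∏ μ, ((γ μ : ℕ).factorial : ℝ))⁻¹ *
        mpd (fun μ => (γ μ : ℕ)) a (fun μ => f μ ∅)) •
      gProd ((List.finRange p).map (fun μ => gPow (nilpart (f μ)) (γ μ : ℕ)))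

namespace CEAux

variable {n : ℕ}

lemma gsign_empty_left (J : Finset (Fin n)) : gsign (∅ : Finset (Fin n)) J = 1 := by
  simp [gsign]

lemma gsign_empty_right (I : Finset (Fin n)) : gsign I (∅ : Finset (Fin n)) = 1 := by
  simp [gsign]

lemma gMul_empty (c d : Coeffs n) : gMul c d ∅ = c ∅ * d ∅ := by
  simp [gMul, gsign]

lemma gMul_congr {c c' d d' : Coeffs n} {I : Finset (Fin n)}
    (hc : ∀ J ⊆ I, c J = c' J) (hd : ∀ J ⊆ I, d J = d' J) :
    gMul c d I = gMul c' d' I := by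
  unfold gMul
  refine Finset.sum_congr rfl fun J hJ => ?_
  rw [Finset.mem_powerset] at hJ
  rw [hc J hJ, hd (I \ J) Finset.sdiff_subset]

lemma gPow_congr {c c' : Coeffs n} :
    ∀ (k : ℕ) (I : Finset (Fin n)), (∀ J ⊆ I, c J = c' J) → gPow c k I = gPow c' k I
  | 0, _, _ => rfl
  | k + 1, I, h => by
    show gMul c (gPow c k) I = gMul c' (gPow c' k) I
    exact gMul_congr h (fun J hJ => gPow_congr k J (fun J' hJ' => h J' (hJ'.trans hJ)))

lemma gProd_congr {α : Type*} {F F' : α → Coeffs n} :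
    ∀ (L : List α) (I : Finset (Fin n)),
      (∀ μ ∈ L, ∀ J ⊆ I, F μ J = F' μ J) →
      gProd (L.map F) I = gProd (L.map F') I
  | [], _, _ => rfl
  | μ :: L, I, h => by
    show gMul (F μ) (gProd (L.map F)) I = gMul (F' μ) (gProd (L.map F')) I
    exact gMul_congr (h μ (List.mem_cons_self)) fun J hJ =>
      gProd_congr L J fun ν hν J' hJ' => h ν (List.mem_cons_of_mem _ hν) J' (hJ'.trans hJ)

lemma gMul_key {c c' d d' : Coeffs n} {K : Finset (Fin n)} (hK : K ≠ ∅)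
    (hc : ∀ I ⊆ K, I ≠ K → c I = c' I) (hd : ∀ I ⊆ K, I ≠ K → d I = d' I) :
    gMul c d K = gMul c' d' K + (c K - c' K) * d ∅ + c ∅ * (d K - d' K) := by
  have h1 : gMul c d K - gMul c' d' K
      = ∑ I ∈ K.powerset,
          (gsign I (K \ I) * c I * d (K \ I) - gsign I (K \ I) * c' I * d' (K \ I)) := by
    rw [Finset.sum_sub_distrib]; rfl
  have h2 : ∀ I ∈ K.powerset,
      gsign I (K \ I) * c I * d (K \ I) - gsign I (K \ I) * c' I * d' (K \ I)
      = (if I = K then (c K - c' K) * d ∅ else 0)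
        + (if I = ∅ then c ∅ * (d K - d' K) else 0) := by
    intro I hI
    rw [Finset.mem_powerset] at hI
    by_cases hIK : I = K
    · subst hIK
      rw [if_pos rfl, if_neg hK, Finset.sdiff_self, gsign_empty_right,
        hd ∅ (Finset.empty_subset _) (Ne.symm hK)]
      ring
    · by_cases hIe : I = ∅
      · subst hIe
        rw [if_neg hIK, if_pos rfl, Finset.sdiff_empty, gsign_empty_left,
          hc ∅ (Finset.empty_subset _) hIK]
        ring
      · rw [if_neg hIK, if_neg hIe, hc I hI hIK]
        have hKI : K \ I ≠ K := by
          intro h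
          rw [Finset.sdiff_eq_self_iff_disjoint] at h
          obtain ⟨i, hi⟩ := Finset.nonempty_iff_ne_empty.mpr hIe
          exact (Finset.disjoint_right.mp h hi) (hI hi)
        rw [hd (K \ I) Finset.sdiff_subset hKI]
        ring
  rw [Finset.sum_congr rfl h2, Finset.sum_add_distrib, Finset.sum_ite_eq',
    Finset.sum_ite_eq'] at h1
  rw [if_pos (Finset.mem_powerset_self K), if_pos (Finset.mem_powerset.mpr
    (Finset.empty_subset K))] at h1
  linarith [h1]

lemma gPow_empty {c : Coeffs n} (hc : c ∅ = 0) :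
    ∀ k, gPow c k ∅ = if k = 0 then (1 : ℝ) else 0
  | 0 => by simp [gPow, gOne]
  | k + 1 => by
    show gMul c (gPow c k) ∅ = _
    rw [gMul_empty, hc]; simp

/-- Truncation of a Grassmann number: the `ξ^K` coefficient is removed. -/
def trunc (K : Finset (Fin n)) (c : Coeffs n) : Coeffs n :=
  fun I => if I = K then 0 else c I

lemma trunc_agree {K : Finset (Fin n)} (c : Coeffs n) {I : Finset (Fin n)}
    (hI : I ⊆ K) (hne : I ≠ K) : ∀ J ⊆ I, c J = trunc K c J := by
  intro J hJ
  have : J ≠ K := fun h => hne (Finset.Subset.antisymm hI (h ▸ hJ))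
  simp [trunc, this]

lemma gPow_key {c : Coeffs n} {K : Finset (Fin n)} (hK : K ≠ ∅) (hc : c ∅ = 0) :
    ∀ k, gPow c k K = gPow (trunc K c) k K + (if k = 1 then c K else 0)
  | 0 => by simp [gPow]
  | k + 1 => by
    show gMul c (gPow c k) K = gMul (trunc K c) (gPow (trunc K c) k) K + _
    have hcc' : ∀ I ⊆ K, I ≠ K → c I = trunc K c I := by
      intro I hI hne
      exact trunc_agree c hI hne I (le_refl I)
    have hd : ∀ I ⊆ K, I ≠ K → gPow c k I = gPow (trunc K c) k I := by
      intro I hI hne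
      exact gPow_congr k I (trunc_agree c hI hne)
    rw [gMul_key hK hcc' hd, hc, gPow_empty hc k]
    have htK : trunc K c K = 0 := if_pos rfl
    rw [htK]
    rcases Nat.eq_zero_or_pos k with h | h
    · subst h; norm_num
    · have h1 : k ≠ 0 := Nat.pos_iff_ne_zero.mp h
      have h2 : k + 1 ≠ 1 := by omega
      rw [if_neg h1, if_neg h2]
      ring

lemma gProd_map_empty {α : Type*} (F : α → Coeffs n) :
    ∀ L : List α, gProd (L.map F) ∅ = (L.map fun μ => F μ ∅).prod
  | [] => by simp [gProd, gOne]
  | μ :: L => by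
    show gMul (F μ) (gProd (L.map F)) ∅ = _
    rw [gMul_empty, gProd_map_empty F L]
    simp

/-- The correction term collecting first-order contributions. -/
def corr {p : ℕ} (c : Fin p → Coeffs n) (γ : Fin p → ℕ) (K : Finset (Fin n)) :
    List (Fin p) → ℝ
  | [] => 0
  | μ :: L =>
      (if γ μ = 1 then c μ K else 0) *
          (L.map fun ν => if γ ν = 0 then (1 : ℝ) else 0).prod
        + (if γ μ = 0 then (1 : ℝ) else 0) * corr c γ K L

lemma key {p : ℕ} {c : Fin p → Coeffs n} {γ : Fin p → ℕ} {K : Finset (Fin n)}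
    (hK : K ≠ ∅) (hc : ∀ μ, c μ ∅ = 0) :
    ∀ L : List (Fin p),
      gProd (L.map fun μ => gPow (c μ) (γ μ)) K
        = gProd (L.map fun μ => gPow (trunc K (c μ)) (γ μ)) K + corr c γ K L
  | [] => by simp [corr]
  | μ :: L => by
    show gMul (gPow (c μ) (γ μ)) (gProd (L.map fun ν => gPow (c ν) (γ ν))) K = _
    have hmu : ∀ I ⊆ K, I ≠ K → gPow (c μ) (γ μ) I = gPow (trunc K (c μ)) (γ μ) I := by
      intro I hI hne
      exact gPow_congr (γ μ) I (trunc_agree (c μ) hI hne)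
    have htail : ∀ I ⊆ K, I ≠ K →
        gProd (L.map fun ν => gPow (c ν) (γ ν)) I
          = gProd (L.map fun ν => gPow (trunc K (c ν)) (γ ν)) I := by
      intro I hI hne
      exact gProd_congr L I fun ν _ J hJ =>
        gPow_congr (γ ν) J (fun J' hJ' => trunc_agree (c ν) hI hne J' (hJ'.trans hJ))
    rw [gMul_key hK hmu htail, key hK hc L, gPow_key hK (hc μ) (γ μ),
      gPow_empty (hc μ) (γ μ), gProd_map_empty]
    have hprod : (L.map fun ν => gPow (c ν) (γ ν) ∅).prod
        = (L.map fun ν => if γ ν = 0 then (1 : ℝ) else 0).prod := by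
      congr 1
      exact List.map_congr_left fun ν _ => gPow_empty (hc ν) (γ ν)
    rw [hprod]
    show _ = gMul (gPow (trunc K (c μ)) (γ μ))
        (gProd (L.map fun ν => gPow (trunc K (c ν)) (γ ν))) K + corr c γ K (μ :: L)
    simp only [corr]
    ring

lemma prod_ind_one {p : ℕ} {γ : Fin p → ℕ} :
    ∀ L : List (Fin p), (∀ ν ∈ L, γ ν = 0) →
      (L.map fun ν => if γ ν = 0 then (1 : ℝ) else 0).prod = 1
  | [], _ => by simp
  | μ :: L, h => by
    simp only [List.map_cons, List.prod_cons, if_pos (h μ (List.mem_cons_self))]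
    rw [prod_ind_one L fun ν hν => h ν (List.mem_cons_of_mem _ hν), one_mul]

lemma prod_ind_zero {p : ℕ} {γ : Fin p → ℕ} :
    ∀ L : List (Fin p), (∃ ν ∈ L, γ ν ≠ 0) →
      (L.map fun ν => if γ ν = 0 then (1 : ℝ) else 0).prod = 0
  | [], h => by simp at h
  | μ :: L, h => by
    simp only [List.map_cons, List.prod_cons]
    by_cases hμ : γ μ = 0
    · obtain ⟨ν, hν, hν0⟩ := h
      rcases List.mem_cons.mp hν with rfl | hν
      · exact absurd hμ hν0
      · rw [prod_ind_zero L ⟨ν, hν, hν0⟩, mul_zero]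
    · rw [if_neg hμ, zero_mul]

lemma corr_zero {p : ℕ} {c : Fin p → Coeffs n} {γ : Fin p → ℕ} {K : Finset (Fin n)} :
    ∀ L, (∀ ν ∈ L, γ ν = 0) → corr c γ K L = 0
  | [], _ => rfl
  | μ :: L, h => by
    have hμ : γ μ = 0 := h μ (List.mem_cons_self)
    simp only [corr, hμ]
    rw [corr_zero L fun ν hν => h ν (List.mem_cons_of_mem _ hν)]
    norm_num

lemma corr_single {p : ℕ} {c : Fin p → Coeffs n} {γ : Fin p → ℕ} {K : Finset (Fin n)}
    {μ₀ : Fin p} (h1 : γ μ₀ = 1) :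
    ∀ L, L.Nodup → μ₀ ∈ L → (∀ ν ∈ L, ν ≠ μ₀ → γ ν = 0) → corr c γ K L = c μ₀ K
  | [], _, hm, _ => by simp at hm
  | μ :: L, hnd, hm, h => by
    simp only [corr]
    rcases List.mem_cons.mp hm with rfl | hm'
    · have hL : ∀ ν ∈ L, γ ν = 0 := by
        intro ν hν
        refine h ν (List.mem_cons_of_mem _ hν) ?_
        rintro rfl
        exact (List.nodup_cons.mp hnd).1 hν
      rw [if_pos h1, prod_ind_one L hL, corr_zero L hL,
        if_neg (by omega : ¬ γ μ₀ = 0)]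
      ring
    · have hμμ₀ : μ ≠ μ₀ := by
        rintro rfl
        exact (List.nodup_cons.mp hnd).1 hm'
      have hμ : γ μ = 0 := h μ (List.mem_cons_self) hμμ₀
      rw [if_neg (by omega : ¬ γ μ = 1), if_pos hμ, zero_mul, zero_add, one_mul]
      exact corr_single h1 L (List.nodup_cons.mp hnd).2 hm'
        fun ν hν hne => h ν (List.mem_cons_of_mem _ hν) hne

lemma corr_big {p : ℕ} {c : Fin p → Coeffs n} {γ : Fin p → ℕ} {K : Finset (Fin n)} :
    ∀ L, 2 ≤ (L.map γ).sum → corr c γ K L = 0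
  | [], h => by simp at h
  | μ :: L, h => by
    simp only [List.map_cons, List.sum_cons] at h
    simp only [corr]
    rcases Nat.lt_or_ge (γ μ) 1 with hμ | hμ
    · have hμ0 : γ μ = 0 := by omega
      rw [corr_big L (by omega), if_neg (by omega : ¬ γ μ = 1), mul_zero,
        zero_mul, zero_add]
    · rcases Nat.lt_or_ge (γ μ) 2 with hμ1 | hμ2
      · have hμ1' : γ μ = 1 := by omega
        have hLsum : 1 ≤ (L.map γ).sum := by omega
        have hex : ∃ ν ∈ L, γ ν ≠ 0 := by
          by_contra hall
          push_neg at hall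
          have : (L.map γ).sum = 0 := by
            rw [List.sum_eq_zero_iff]
            intro x hx
            obtain ⟨ν, hν, rfl⟩ := List.mem_map.mp hx
            exact hall ν hν
          omega
        rw [prod_ind_zero L hex, mul_zero, if_neg (by omega : ¬ γ μ = 0),
          zero_mul, zero_add]
      · rw [if_neg (by omega : ¬ γ μ = 1), if_neg (by omega : ¬ γ μ = 0),
          zero_mul, zero_mul, zero_add]

lemma corr_finRange {p : ℕ} (c : Fin p → Coeffs n) (γ : Fin p → ℕ) (K : Finset (Fin n)) :
    corr c γ K (List.finRange p)
      = ∑ μ, if γ = Pi.single μ 1 then c μ K else 0 := by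
  have hlist : ((List.finRange p).map γ).sum = ∑ μ, γ μ := (Fin.sum_univ_def γ).symm
  rcases Nat.lt_or_ge (∑ μ, γ μ) 2 with hS | hS
  · rcases Nat.lt_or_ge (∑ μ, γ μ) 1 with hS0 | hS1
    · -- all zero
      have hall : ∀ μ, γ μ = 0 := by
        intro μ
        have := Finset.sum_eq_zero_iff.mp (by omega : ∑ μ, γ μ = 0)
        exact this μ (Finset.mem_univ μ)
      rw [corr_zero _ (fun ν _ => hall ν)]
      refine (Finset.sum_eq_zero fun μ _ => ?_).symm
      rw [if_neg]
      intro h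
      have := congrFun h μ
      rw [hall μ, Pi.single_eq_same] at this
      exact one_ne_zero this.symm
    · -- sum = 1
      have hS1' : ∑ μ, γ μ = 1 := by omega
      obtain ⟨μ₀, hμ₀⟩ : ∃ μ₀, γ μ₀ ≠ 0 := by
        by_contra hall
        push_neg at hall
        rw [Finset.sum_eq_zero (fun μ _ => hall μ)] at hS1'
        omega
      have hle : γ μ₀ ≤ ∑ μ, γ μ :=
        Finset.single_le_sum (fun μ _ => Nat.zero_le _) (Finset.mem_univ μ₀)
      have hγμ₀ : γ μ₀ = 1 := by omega
      have hrest : ∀ ν, ν ≠ μ₀ → γ ν = 0 := by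
        intro ν hν
        have hsplit := Finset.add_sum_erase Finset.univ γ (Finset.mem_univ μ₀)
        have hz : ∑ μ ∈ Finset.univ.erase μ₀, γ μ = 0 := by omega
        have := Finset.sum_eq_zero_iff.mp hz
        exact this ν (Finset.mem_erase.mpr ⟨hν, Finset.mem_univ ν⟩)
      have hγ : γ = Pi.single μ₀ 1 := by
        funext ν
        rw [Pi.single_apply]
        by_cases h : ν = μ₀
        · subst h; rw [if_pos rfl, hγμ₀]
        · rw [if_neg h, hrest ν h]
      rw [corr_single hγμ₀ (List.finRange p) (List.nodup_finRange p)
        (List.mem_finRange μ₀) (fun ν _ hν => hrest ν hν)]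
      rw [Finset.sum_eq_single_of_mem μ₀ (Finset.mem_univ μ₀)]
      · rw [if_pos hγ]
      · intro μ _ hμ
        rw [if_neg]
        intro h
        apply hμ
        have h1 := congrFun (hγ.symm.trans h) μ₀
        rw [Pi.single_eq_same, Pi.single_apply] at h1
        by_contra hne
        rw [if_neg (Ne.symm hμ)] at h1
        exact one_ne_zero h1
  · -- sum ≥ 2
    rw [corr_big _ (by omega)]
    refine (Finset.sum_eq_zero fun μ _ => ?_).symm
    rw [if_neg]
    intro h
    have : ∑ ν, γ ν = 1 := by
      rw [h]
      rw [Finset.sum_eq_single_of_mem μ (Finset.mem_univ μ)]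
      · rw [Pi.single_eq_same]
      · intro ν _ hν
        rw [Pi.single_apply, if_neg hν]
    omega

/-! ### Polynomial mirror of the Grassmann algebra -/

abbrev Sig (p n : ℕ) := (Fin p → Fin (n + 1)) ⊕ (Fin p × Finset (Fin n))

abbrev Poly (p n : ℕ) := MvPolynomial (Sig p n) ℝ

abbrev PCoeffs (p n : ℕ) := Finset (Fin n) → Poly p n

def pMul {p n : ℕ} (c d : PCoeffs p n) : PCoeffs p n :=
  fun K => ∑ I ∈ K.powerset,
    (-1 : Poly p n) ^ (∑ i ∈ I, ((K \ I).filter (· < i)).card) * c I * d (K \ I)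

def pOne {p n : ℕ} : PCoeffs p n := fun K => if K = ∅ then 1 else 0

def pPow {p n : ℕ} (c : PCoeffs p n) : ℕ → PCoeffs p n
  | 0 => pOne
  | k + 1 => pMul c (pPow c k)

def pProd {p n : ℕ} (l : List (PCoeffs p n)) : PCoeffs p n := l.foldr pMul pOne

variable {p : ℕ} (E : Sig p n → ℝ)

lemma eval_pMul (c d : PCoeffs p n) (K : Finset (Fin n)) :
    MvPolynomial.eval E (pMul c d K)
      = gMul (fun I => MvPolynomial.eval E (c I)) (fun I => MvPolynomial.eval E (d I)) K := by
  simp only [pMul, gMul, gsign, map_sum, map_mul, map_pow, map_neg, map_one]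

lemma eval_pOne (K : Finset (Fin n)) :
    MvPolynomial.eval E (pOne (p := p) K) = gOne K := by
  simp only [pOne, gOne, apply_ite (MvPolynomial.eval E), map_one, map_zero]

lemma eval_pPow (c : PCoeffs p n) :
    ∀ (k : ℕ) (K : Finset (Fin n)),
      MvPolynomial.eval E (pPow c k K) = gPow (fun I => MvPolynomial.eval E (c I)) k K
  | 0, K => eval_pOne E K
  | k + 1, K => by
    show MvPolynomial.eval E (pMul c (pPow c k) K) = _
    rw [eval_pMul]
    show gMul _ (fun I => MvPolynomial.eval E (pPow c k I)) K = _
    have : (fun I => MvPolynomial.eval E (pPow c k I))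
        = gPow (fun I => MvPolynomial.eval E (c I)) k := by
      funext I; exact eval_pPow c k I
    rw [this]
    rfl

lemma eval_pProd {α : Type*} (F : α → PCoeffs p n) :
    ∀ (L : List α) (K : Finset (Fin n)),
      MvPolynomial.eval E (pProd (L.map F) K)
        = gProd (L.map fun μ => fun I => MvPolynomial.eval E (F μ I)) K
  | [], K => eval_pOne E K
  | μ :: L, K => by
    show MvPolynomial.eval E (pMul (F μ) (pProd (L.map F)) K) = _
    rw [eval_pMul]
    have : (fun I => MvPolynomial.eval E (pProd (L.map F) I))
        = gProd (L.map fun μ => fun I => MvPolynomial.eval E (F μ I)) := by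
      funext I; exact eval_pProd F L I
    erw [this]
    rfl

/-- Symbolic nilpotent part, truncated at `K`. -/
def sc (p : ℕ) {n : ℕ} (K : Finset (Fin n)) (μ : Fin p) : PCoeffs p n :=
  fun I => if I = ∅ ∨ I = K then 0 else MvPolynomial.X (Sum.inr (μ, I))

/-- The universal polynomial. -/
def Rpoly (p n : ℕ) (K : Finset (Fin n)) : Poly p n :=
  ∑ γ ∈ Finset.univ.filter (fun γ : Fin p → Fin (n + 1) => ∑ μ, (γ μ : ℕ) ≤ n),
    MvPolynomial.C ((∏ μ, ((γ μ : ℕ).factorial : ℝ))⁻¹) * MvPolynomial.X (Sum.inl γ) *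
      pProd ((List.finRange p).map fun μ => pPow (sc p K μ) (γ μ : ℕ)) K

end CEAux

section MpdSingle

variable {p : ℕ}

lemma foldr_comp_all_id {β : Type*} {g : Fin p → β → β} :
    ∀ L : List (Fin p), (∀ ν ∈ L, g ν = id) →
      (L.map g).foldr (· ∘ ·) id = id
  | [], _ => rfl
  | μ :: L, h => by
    simp only [List.map_cons, List.foldr_cons]
    rw [h μ (List.mem_cons_self), foldr_comp_all_id L
      fun ν hν => h ν (List.mem_cons_of_mem _ hν)]
    rfl

lemma mpd_single (μ₀ : Fin p) (γ : Fin p → ℕ)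
    (hγ : ∀ ν, γ ν = if ν = μ₀ then 1 else 0) (a : (Fin p → ℝ) → ℝ) :
    mpd γ a = pd μ₀ a := by
  unfold mpd
  have main : ∀ L : List (Fin p), L.Nodup → μ₀ ∈ L →
      (L.map fun μ => (pd μ)^[γ μ]).foldr (· ∘ ·) id = pd μ₀ := by
    intro L
    induction L with
    | nil => intro _ hm; simp at hm
    | cons μ L ih =>
      intro hnd hm
      simp only [List.map_cons, List.foldr_cons]
      by_cases hμ : μ = μ₀
      · subst hμ
        have hL : ∀ ν ∈ L, (fun μ => (pd μ)^[γ μ]) ν = id := by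
          intro ν hν
          have hνμ : ν ≠ μ := by
            rintro rfl
            exact (List.nodup_cons.mp hnd).1 hν
          simp only [hγ ν, if_neg hνμ, Function.iterate_zero]
        rw [foldr_comp_all_id L hL, hγ μ, if_pos rfl, Function.iterate_one]
        rfl
      · rw [hγ μ, if_neg hμ, Function.iterate_zero]
        have hm' : μ₀ ∈ L := by
          rcases List.mem_cons.mp hm with h | h
          · exact absurd h.symm hμ
          · exact h
        rw [ih (List.nodup_cons.mp hnd).2 hm']
        rfl
  rw [main (List.finRange p) (List.nodup_finRange p) (List.mem_finRange μ₀)]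

end MpdSingle

/-- The key structural lemma for the triangular induction: for each multi-index
`K ∈ {0,1}^n` with `deg K > 0`, the `ξ^K`-coefficient of the Taylor pullback
`F*(a)` equals `Σ_μ (∂_{y_μ} a)(f̃)·f^μ_K` plus a universal polynomial `R`
(depending only on `n`, `p`, `K`, not on `a` or the `f^μ`) in the partial
derivatives of `a` up to order `n` evaluated at the body, and the coefficients
`f^ν_I` with `deg I < deg K`.  The `f^μ` are elements of
`C^∞(V) ⊗ Λ(ξ₁,…,ξ_n)` of even total parity, and the identity holds at every
point `v` of `V ⊆ ℝ^{1+m}`. -/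
theorem coefficient_extraction (p m n : ℕ) (K : Finset (Fin n)) :
    ∃ R : MvPolynomial ((Fin p → Fin (n + 1)) ⊕ (Fin p × Finset (Fin n))) ℝ,
      ∀ (V : Set (ℝ × (Fin m → ℝ)))
        (a : (Fin p → ℝ) → ℝ), ContDiff ℝ (⊤ : ℕ∞) a →
        ∀ f : Fin p → (ℝ × (Fin m → ℝ)) → Coeffs n,
          (∀ μ v I, I.card % 2 = 1 → f μ v I = 0) →
          ∀ v ∈ V, 0 < K.card →
            Fstar a (fun μ => f μ v) K =
              (∑ μ, pd μ a (fun ν => f ν v ∅) * f μ v K) +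
                MvPolynomial.eval
                  (fun w => match w with
                    | Sum.inl γ => mpd (fun μ => (γ μ : ℕ)) a (fun ν => f ν v ∅)
                    | Sum.inr (ν, I) => if I.card < K.card then f ν v I else 0)
                  R := by
  refine ⟨CEAux.Rpoly p n K, ?_⟩
  intro V a _ f _ v _ hKpos
  have hKne : K ≠ ∅ := Finset.nonempty_iff_ne_empty.mp (Finset.card_pos.mp hKpos)
  have hn : 1 ≤ n := by
    have := Finset.card_le_univ K
    simp only [Finset.card_univ, Fintype.card_fin] at this
    omega
  set E : CEAux.Sig p n → ℝ := fun w => match w with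
    | Sum.inl γ => mpd (fun μ => (γ μ : ℕ)) a (fun ν => f ν v ∅)
    | Sum.inr (ν, I) => if I.card < K.card then f ν v I else 0 with hE
  have hzero : ∀ μ : Fin p, nilpart (f μ v) ∅ = 0 := fun μ => if_pos rfl
  -- the base agreement between the evaluated symbolic coefficients and the
  -- truncated nilpotent parts
  have base : ∀ (μ : Fin p), ∀ J ⊆ K,
      MvPolynomial.eval E (CEAux.sc p K μ J) = CEAux.trunc K (nilpart (f μ v)) J := by
    intro μ J hJ
    by_cases hJe : J = ∅
    · subst hJe
      have : (∅ : Finset (Fin n)) ≠ K := Ne.symm hKne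
      simp [CEAux.sc, CEAux.trunc, nilpart, this]
    · by_cases hJK : J = K
      · subst hJK
        simp [CEAux.sc, CEAux.trunc]
      · have hcard : J.card < K.card :=
          Finset.card_lt_card (HasSubset.Subset.ssubset_of_ne hJ hJK)
        simp only [CEAux.sc, if_neg (by tauto : ¬ (J = ∅ ∨ J = K)),
          MvPolynomial.eval_X, CEAux.trunc, if_neg hJK, nilpart, if_neg hJe, hE]
        rw [if_pos hcard]
  -- Step 1: unfold `Fstar` at `K`
  have step1 : Fstar a (fun μ => f μ v) K =
      ∑ γ ∈ Finset.univ.filter (fun γ : Fin p → Fin (n + 1) => ∑ μ, (γ μ : ℕ) ≤ n),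
        ((∏ μ, ((γ μ : ℕ).factorial : ℝ))⁻¹ *
            mpd (fun μ => (γ μ : ℕ)) a (fun ν => f ν v ∅)) *
          gProd ((List.finRange p).map fun μ => gPow (nilpart (f μ v)) ((γ μ : ℕ))) K := by
    unfold Fstar
    simp only [Finset.sum_apply, Pi.smul_apply, smul_eq_mul]
  -- Step 2: per-`γ` decomposition into truncated part plus correction
  have step2 : ∀ γ : Fin p → Fin (n + 1),
      gProd ((List.finRange p).map fun μ => gPow (nilpart (f μ v)) ((γ μ : ℕ))) K
        = gProd ((List.finRange p).map fun μ =>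
              gPow (CEAux.trunc K (nilpart (f μ v))) ((γ μ : ℕ))) K
          + ∑ μ, (if (fun ν => ((γ ν : ℕ))) = (Pi.single μ 1 : Fin p → ℕ)
              then f μ v K else 0) := by
    intro γ
    rw [CEAux.key hKne hzero (List.finRange p),
      CEAux.corr_finRange (fun μ => nilpart (f μ v)) (fun ν => ((γ ν : ℕ))) K]
    congr 1
    refine Finset.sum_congr rfl fun μ _ => ?_
    simp [nilpart, hKne]
  -- Step 4: the correction terms sum to the linear part
  have step4 :
      (∑ γ ∈ Finset.univ.filter (fun γ : Fin p → Fin (n + 1) => ∑ μ, (γ μ : ℕ) ≤ n),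
        ((∏ μ, ((γ μ : ℕ).factorial : ℝ))⁻¹ *
            mpd (fun μ => (γ μ : ℕ)) a (fun ν => f ν v ∅)) *
          ∑ μ, (if (fun ν => ((γ ν : ℕ))) = (Pi.single μ 1 : Fin p → ℕ)
              then f μ v K else 0))
      = ∑ μ, pd μ a (fun ν => f ν v ∅) * f μ v K := by
    simp only [Finset.mul_sum]
    rw [Finset.sum_comm]
    refine Finset.sum_congr rfl fun μ _ => ?_
    have hval : ∀ ν : Fin p,
        (((Pi.single μ (1 : Fin (n + 1)) : Fin p → Fin (n + 1)) ν : ℕ))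
          = if ν = μ then 1 else 0 := by
      intro ν
      rw [Pi.single_apply]
      split_ifs with h
      · exact (Fin.val_one' (n + 1)).trans (Nat.mod_eq_of_lt (by omega))
      · rfl
    have hcond : (fun ν => (((Pi.single μ (1 : Fin (n + 1)) : Fin p → Fin (n + 1)) ν : ℕ)))
        = (Pi.single μ 1 : Fin p → ℕ) := by
      funext ν
      rw [hval, Pi.single_apply]
    have hmem : (Pi.single μ (1 : Fin (n + 1)) : Fin p → Fin (n + 1)) ∈
        Finset.univ.filter (fun γ : Fin p → Fin (n + 1) => ∑ ν, (γ ν : ℕ) ≤ n) := by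
      refine Finset.mem_filter.mpr ⟨Finset.mem_univ _, ?_⟩
      calc ∑ ν, (((Pi.single μ (1 : Fin (n + 1)) : Fin p → Fin (n + 1)) ν : ℕ))
          = ∑ ν : Fin p, (if ν = μ then 1 else 0) :=
            Finset.sum_congr rfl fun ν _ => hval ν
        _ = 1 := by rw [Finset.sum_ite_eq' Finset.univ μ (fun _ => 1),
              if_pos (Finset.mem_univ μ)]
        _ ≤ n := hn
    rw [Finset.sum_eq_single_of_mem _ hmem]
    · rw [if_pos hcond]
      have hfact : (∏ ν, (((((Pi.single μ (1 : Fin (n + 1)) : Fin p → Fin (n + 1)) ν : ℕ))).factorial : ℝ)) = 1 := by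
        refine Finset.prod_eq_one fun ν _ => ?_
        rw [hval ν]
        split_ifs <;> norm_num
      rw [hfact, inv_one, one_mul, mpd_single μ _ hval a]
    · intro b _ hb
      rw [if_neg, mul_zero]
      intro h
      apply hb
      funext ν
      have h1 : ((b ν : ℕ)) = ((Pi.single μ (1 : Fin (n + 1)) : Fin p → Fin (n + 1)) ν : ℕ) := by
        rw [hval ν, ← Pi.single_apply, ← h]
      exact Fin.ext h1
  -- Step 5: the truncated part is the evaluation of the universal polynomial
  have hpergamma : ∀ γ : Fin p → Fin (n + 1),
      MvPolynomial.eval E (CEAux.pProd ((List.finRange p).map fun μ =>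
          CEAux.pPow (CEAux.sc p K μ) ((γ μ : ℕ))) K)
        = gProd ((List.finRange p).map fun μ =>
            gPow (CEAux.trunc K (nilpart (f μ v))) ((γ μ : ℕ))) K := by
    intro γ
    rw [CEAux.eval_pProd]
    have h1 : ((List.finRange p).map fun μ => fun I =>
          MvPolynomial.eval E (CEAux.pPow (CEAux.sc p K μ) ((γ μ : ℕ)) I))
        = (List.finRange p).map fun μ =>
            gPow (fun I => MvPolynomial.eval E (CEAux.sc p K μ I)) ((γ μ : ℕ)) :=
      List.map_congr_left fun μ _ => funext fun I => CEAux.eval_pPow E _ _ I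
    rw [h1]
    exact CEAux.gProd_congr (List.finRange p) K fun μ _ J hJ =>
      CEAux.gPow_congr _ J fun J' hJ' => base μ J' (hJ'.trans hJ)
  have step5 : MvPolynomial.eval E (CEAux.Rpoly p n K)
      = ∑ γ ∈ Finset.univ.filter (fun γ : Fin p → Fin (n + 1) => ∑ μ, (γ μ : ℕ) ≤ n),
          ((∏ μ, ((γ μ : ℕ).factorial : ℝ))⁻¹ *
              mpd (fun μ => (γ μ : ℕ)) a (fun ν => f ν v ∅)) *
            gProd ((List.finRange p).map fun μ =>
              gPow (CEAux.trunc K (nilpart (f μ v))) ((γ μ : ℕ))) K := by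
    rw [CEAux.Rpoly, map_sum]
    refine Finset.sum_congr rfl fun γ _ => ?_
    rw [map_mul, map_mul, MvPolynomial.eval_C, MvPolynomial.eval_X, hpergamma γ]
  -- Assemble
  calc Fstar a (fun μ => f μ v) K
      = ∑ γ ∈ Finset.univ.filter (fun γ : Fin p → Fin (n + 1) => ∑ μ, (γ μ : ℕ) ≤ n),
          (((∏ μ, ((γ μ : ℕ).factorial : ℝ))⁻¹ *
              mpd (fun μ => (γ μ : ℕ)) a (fun ν => f ν v ∅)) *
            gProd ((List.finRange p).map fun μ =>
              gPow (CEAux.trunc K (nilpart (f μ v))) ((γ μ : ℕ))) K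
          + ((∏ μ, ((γ μ : ℕ).factorial : ℝ))⁻¹ *
              mpd (fun μ => (γ μ : ℕ)) a (fun ν => f ν v ∅)) *
            ∑ μ, (if (fun ν => ((γ ν : ℕ))) = (Pi.single μ 1 : Fin p → ℕ)
                then f μ v K else 0)) := by
        rw [step1]
        refine Finset.sum_congr rfl fun γ _ => ?_
        rw [step2 γ, mul_add]
    _ = (∑ μ, pd μ a (fun ν => f ν v ∅) * f μ v K)
          + MvPolynomial.eval E (CEAux.Rpoly p n K) := by
        rw [Finset.sum_add_distrib, step4, step5, add_comm]
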